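/- arXiv:2601.17449 — 2 statements merged into one kernel-verified Lean document; each statement's English description precedes it below -/
import Mathlib

section
/- Suppose F is L-smooth, satisfies the μ-PL condition, and at each step we descend along an inexact gradient g_k with ‖g_k - ∇F(w_k)‖ ≤ δ for all k. Then gradient descent w_{k+1} = w_k - (1/(2L)) g_k satisfies F(w_{k+1}) - F* ≤ (1 - μ/(4L))(F(w_k) - F*) + δ²/(2L). -/
open InnerProductSpace

lemma descent_aux {n : ℕ} {L : ℝ} (hL : 0 < L) (F : EuclideanSpace ℝ (Fin n) → ℝ)
    (hdiff : Differentiable ℝ F)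
    (hlip : ∀ w u, ‖gradient F w - gradient F u‖ ≤ L * ‖w - u‖)
    (x y : EuclideanSpace ℝ (Fin n)) :
    F y ≤ F x + inner ℝ (gradient F x) (y - x) + L / 2 * ‖y - x‖ ^ 2 := by
  set v := y - x with hv
  have key : ∀ p : EuclideanSpace ℝ (Fin n), (fderiv ℝ F p) v
      = inner ℝ (gradient F p) v := by
    intro p
    simp only [gradient]
    rw [toDual_symm_apply]
  have hline : ∀ t : ℝ, HasDerivAt (fun t : ℝ => x + t • v) v t := by
    intro t
    simpa using ((hasDerivAt_id t).smul_const v).const_add x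
  have hφ : ∀ t : ℝ, HasDerivAt (fun t : ℝ => F (x + t • v))
      (inner ℝ (gradient F (x + t • v)) v) t := by
    intro t
    have h1 := ((hdiff (x + t • v)).hasFDerivAt).comp_hasDerivAt t (hline t)
    rw [key] at h1
    exact h1
  set G : ℝ → ℝ := fun t => F x + t * inner ℝ (gradient F x) v
      + L / 2 * ‖v‖ ^ 2 * t ^ 2 - F (x + t • v) with hG
  have hG' : ∀ t : ℝ, HasDerivAt G
      (inner ℝ (gradient F x) v + L * ‖v‖ ^ 2 * t - inner ℝ (gradient F (x + t • v)) v) t := by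
    intro t
    have h1 : HasDerivAt (fun t : ℝ => F x + t * inner ℝ (gradient F x) v
        + L / 2 * ‖v‖ ^ 2 * t ^ 2)
        ((inner ℝ (gradient F x) v : ℝ) + L / 2 * ‖v‖ ^ 2 * (2 * t)) t := by
      have ha : HasDerivAt (fun t : ℝ => t * (inner ℝ (gradient F x) v : ℝ))
          (inner ℝ (gradient F x) v : ℝ) t := by
        simpa using (hasDerivAt_id t).mul_const (inner ℝ (gradient F x) v : ℝ)
      have hb : HasDerivAt (fun t : ℝ => L / 2 * ‖v‖ ^ 2 * t ^ 2)
          (L / 2 * ‖v‖ ^ 2 * (2 * t)) t := by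
        simpa [mul_comm] using (hasDerivAt_pow 2 t).const_mul (L / 2 * ‖v‖ ^ 2)
      exact (ha.const_add (F x)).add hb
    have := h1.sub (hφ t)
    exact this.congr_deriv (by ring)
  have hderiv_nonneg : ∀ t ∈ Set.Icc (0:ℝ) 1, 0 ≤
      (inner ℝ (gradient F x) v + L * ‖v‖ ^ 2 * t - inner ℝ (gradient F (x + t • v)) v : ℝ) := by
    intro t ht
    have hdiff_inner : (inner ℝ (gradient F (x + t • v)) v : ℝ) - inner ℝ (gradient F x) v
        = inner ℝ (gradient F (x + t • v) - gradient F x) v := by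
      rw [inner_sub_left]
    have h1 : (inner ℝ (gradient F (x + t • v) - gradient F x) v : ℝ)
        ≤ ‖gradient F (x + t • v) - gradient F x‖ * ‖v‖ := real_inner_le_norm _ _
    have h2 : ‖gradient F (x + t • v) - gradient F x‖ ≤ L * (t * ‖v‖) := by
      have := hlip (x + t • v) x
      simpa [norm_smul, abs_of_nonneg ht.1] using this
    have h3 : ‖gradient F (x + t • v) - gradient F x‖ * ‖v‖ ≤ L * (t * ‖v‖) * ‖v‖ :=
      mul_le_mul_of_nonneg_right h2 (norm_nonneg v)
    nlinarith [norm_nonneg v]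
  have hmono : G 0 ≤ G 1 := by
    have hcont : ContinuousOn G (Set.Icc 0 1) := fun t _ => ((hG' t).continuousAt).continuousWithinAt
    have hdiffG : ∀ t ∈ interior (Set.Icc (0:ℝ) 1), DifferentiableAt ℝ G t :=
      fun t _ => (hG' t).differentiableAt
    have := monotoneOn_of_deriv_nonneg (convex_Icc (0:ℝ) 1) hcont
      (fun t ht => (hdiffG t (by simpa using ht)).differentiableWithinAt)
      (fun t ht => by
        rw [(hG' t).deriv]
        exact hderiv_nonneg t (Set.mem_Icc_of_Ioo (by simpa using ht)))
    exact this (Set.left_mem_Icc.2 zero_le_one) (Set.right_mem_Icc.2 zero_le_one) zero_le_one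
  have h0 : G 0 = 0 := by simp [hG]
  have h1 : G 1 = F x + inner ℝ (gradient F x) v + L / 2 * ‖v‖ ^ 2 - F y := by
    simp [hG, hv]
  rw [h0, h1] at hmono
  linarith

set_option maxHeartbeats 1000000 in
theorem inexact_pl_step (n : ℕ) (L μ δ : ℝ) (hL : 0 < L) (hμ : 0 < μ) (hμL : μ ≤ L)
    (F : EuclideanSpace ℝ (Fin n) → ℝ)
    (hdiff : Differentiable ℝ F)
    (hlip : ∀ w u, ‖gradient F w - gradient F u‖ ≤ L * ‖w - u‖)
    (wstar : EuclideanSpace ℝ (Fin n))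
    (hmin : ∀ w, F wstar ≤ F w)
    (hPL : ∀ w, 2 * μ * (F w - F wstar) ≤ ‖gradient F w‖ ^ 2)
    (w g : ℕ → EuclideanSpace ℝ (Fin n))
    (hg : ∀ k, ‖g k - gradient F (w k)‖ ≤ δ)
    (hstep : ∀ k, w (k + 1) = w k - (1 / (2 * L)) • g k) :
    ∀ k, F (w (k + 1)) - F wstar ≤
      (1 - μ / (4 * L)) * (F (w k) - F wstar) + δ ^ 2 / (2 * L) := by
  intro k
  set x := w k with hx
  set y := w (k + 1) with hy
  set G := gradient F x with hGdef
  set e : EuclideanSpace ℝ (Fin n) := g k - G with he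
  have hge : g k = G + e := by simp [he]
  have hyx : y - x = -(1 / (2 * L)) • (G + e) := by
    rw [hy, hstep k, ← hge, ← hx]
    module
  have hdesc := descent_aux hL F hdiff hlip x y
  rw [hyx] at hdesc
  have hinner : (inner ℝ G (-(1 / (2 * L)) • (G + e)) : ℝ)
      = -(1 / (2 * L)) * (‖G‖ ^ 2 + inner ℝ G e) := by
    rw [real_inner_smul_right, inner_add_right, real_inner_self_eq_norm_sq]
  have hnorm : ‖(-(1 / (2 * L)) • (G + e) : EuclideanSpace ℝ (Fin n))‖ ^ 2
      = (1 / (2 * L)) ^ 2 * (‖G‖ ^ 2 + 2 * inner ℝ G e + ‖e‖ ^ 2) := by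
    have habs : ‖(-(1 / (2 * L)) : ℝ)‖ = 1 / (2 * L) := by
      rw [Real.norm_eq_abs, abs_neg, abs_of_pos (by positivity)]
    rw [norm_smul, habs, mul_pow, norm_add_sq_real]
  rw [hinner, hnorm] at hdesc
  set c : ℝ := 1 / (8 * L) with hc
  have hcpos : 0 < c := by rw [hc]; positivity
  have hde : ‖e‖ ≤ δ := by simpa [he, hGdef, hx] using hg k
  have hdnn : (0:ℝ) ≤ δ := le_trans (norm_nonneg e) hde
  have hFx : 0 ≤ F x - F wstar := by linarith [hmin x]
  have hGnn : (0:ℝ) ≤ ‖G‖ := norm_nonneg G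
  have hB1 : -(inner ℝ G e : ℝ) ≤ ‖G‖ * δ := by
    have h1 := neg_abs_le (inner ℝ G e : ℝ)
    have h2 := abs_real_inner_le_norm G e
    nlinarith [norm_nonneg e]
  have he2 : ‖e‖ ^ 2 ≤ δ ^ 2 := by nlinarith [norm_nonneg e]
  have hGd : ‖G‖ * δ ≤ (‖G‖ ^ 2 + δ ^ 2) / 2 := by nlinarith [sq_nonneg (‖G‖ - δ)]
  have hrw : F x + -(1 / (2 * L)) * (‖G‖ ^ 2 + (inner ℝ G e : ℝ))
      + L / 2 * ((1 / (2 * L)) ^ 2 * (‖G‖ ^ 2 + 2 * (inner ℝ G e : ℝ) + ‖e‖ ^ 2))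
      = F x - 3 * c * ‖G‖ ^ 2 - 2 * c * (inner ℝ G e : ℝ) + c * ‖e‖ ^ 2 := by
    rw [hc]; field_simp; ring
  rw [hrw] at hdesc
  have hb1 : -(2 * c * (inner ℝ G e : ℝ)) ≤ 2 * c * (‖G‖ * δ) := by nlinarith
  have hb2 : 2 * c * (‖G‖ * δ) ≤ c * (‖G‖ ^ 2 + δ ^ 2) := by nlinarith
  have hb3 : c * ‖e‖ ^ 2 ≤ c * δ ^ 2 := by nlinarith
  have hkey : F y - F wstar ≤ (F x - F wstar) - 2 * c * ‖G‖ ^ 2 + 2 * c * δ ^ 2 := by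
    linarith
  have hPL2 : 2 * c * (2 * μ * (F x - F wstar)) ≤ 2 * c * ‖G‖ ^ 2 := by
    have := hPL x
    rw [← hGdef] at this
    nlinarith
  have hmu : μ / (4 * L) = 2 * c * μ := by rw [hc]; field_simp; ring
  have hd2 : δ ^ 2 / (2 * L) = 4 * c * δ ^ 2 := by rw [hc]; field_simp; ring
  rw [hmu, hd2]
  have hnn1 : 0 ≤ 2 * c * μ * (F x - F wstar) := by positivity
  have hnn2 : 0 ≤ 2 * c * δ ^ 2 := by positivity
  nlinarith [hkey, hPL2, hnn1, hnn2]
end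

section
/- Under L-smoothness, μ-PL, bounded per-sample gradients G, and uniform gradient bias δ = βGε (arising from an ε-accurate homogeneity approximation with scale β), gradient descent with step size η = 1/(2L) achieves after k steps: E_k := F(w_k) - F* ≤ (1 - μ/(4L))^k (F(w_0) - F*) + (2β²G²/μ)ε². -/
open InnerProductSpace

variable {E : Type*} [NormedAddCommGroup E] [InnerProductSpace ℝ E] [CompleteSpace E]

lemma smooth_descent (L : ℝ) (hL : 0 < L) (F : E → ℝ)
    (hdiff : Differentiable ℝ F)
    (hlip : ∀ w u, ‖gradient F w - gradient F u‖ ≤ L * ‖w - u‖)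
    (x v : E) :
    F (x + v) ≤ F x + ⟪gradient F x, v⟫_ℝ + L / 2 * ‖v‖ ^ 2 := by
  set f : ℝ → ℝ := fun t => F (x + t • v) with hf_def
  set f' : ℝ → ℝ := fun t => ⟪gradient F (x + t • v), v⟫_ℝ with hf'_def
  set B : ℝ → ℝ := fun t => F x + t * ⟪gradient F x, v⟫_ℝ + L * t ^ 2 / 2 * ‖v‖ ^ 2 with hB_def
  set B' : ℝ → ℝ := fun t => ⟪gradient F x, v⟫_ℝ + L * t * ‖v‖ ^ 2 with hB'_def
  have hcf : ContinuousOn f (Set.Icc 0 1) :=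
    (hdiff.continuous.comp (by fun_prop : Continuous fun t : ℝ => x + t • v)).continuousOn
  have hf' : ∀ t ∈ Set.Ico (0:ℝ) 1, HasDerivWithinAt f (f' t) (Set.Ici t) t := by
    intro t _
    have h1 : HasDerivAt (fun t : ℝ => x + t • v) v t := by
      simpa using ((hasDerivAt_id t).smul_const v).const_add x
    have h2 : HasFDerivAt F (toDual ℝ E (gradient F (x + t • v))) (x + t • v) :=
      (hdiff _).hasGradientAt
    have h3 := h2.comp_hasDerivAt t h1
    have : HasDerivAt f (f' t) t := by
      have h4 : HasDerivAt f ((toDual ℝ E (gradient F (x + t • v))) v) t := h3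
      simpa [hf'_def] using h4
    exact this.hasDerivWithinAt
  have ha : f 0 ≤ B 0 := by simp [hf_def, hB_def]
  have hcB : ContinuousOn B (Set.Icc 0 1) := by fun_prop
  have hB' : ∀ t ∈ Set.Ico (0:ℝ) 1, HasDerivWithinAt B (B' t) (Set.Ici t) t := by
    intro t _
    have h1 : HasDerivAt (fun t : ℝ => F x + t * ⟪gradient F x, v⟫_ℝ)
        (⟪gradient F x, v⟫_ℝ) t := by
      simpa using ((hasDerivAt_id t).mul_const _).const_add (F x)
    have h2 : HasDerivAt (fun t : ℝ => L * t ^ 2 / 2 * ‖v‖ ^ 2) (L * t * ‖v‖ ^ 2) t := by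
      have hp : HasDerivAt (fun t : ℝ => t ^ 2) (2 * t) t := by
        simpa using hasDerivAt_pow 2 t
      have := ((hp.const_mul L).div_const 2).mul_const (‖v‖ ^ 2)
      rw [show L * t * ‖v‖ ^ 2 = L * (2 * t) / 2 * ‖v‖ ^ 2 by ring]
      exact this
    exact (h1.add h2).hasDerivWithinAt
  have hbound : ∀ t ∈ Set.Ico (0:ℝ) 1, f' t ≤ B' t := by
    intro t ht
    have h1 : ⟪gradient F (x + t • v) - gradient F x, v⟫_ℝ
        ≤ ‖gradient F (x + t • v) - gradient F x‖ * ‖v‖ := real_inner_le_norm _ _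
    have h2 : ‖gradient F (x + t • v) - gradient F x‖ ≤ L * (t * ‖v‖) := by
      have := hlip (x + t • v) x
      simpa [norm_smul, abs_of_nonneg ht.1, mul_assoc] using this
    have h3 : ⟪gradient F (x + t • v), v⟫_ℝ - ⟪gradient F x, v⟫_ℝ ≤ L * t * ‖v‖ ^ 2 := by
      calc ⟪gradient F (x + t • v), v⟫_ℝ - ⟪gradient F x, v⟫_ℝ
          = ⟪gradient F (x + t • v) - gradient F x, v⟫_ℝ := by rw [inner_sub_left]
        _ ≤ ‖gradient F (x + t • v) - gradient F x‖ * ‖v‖ := h1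
        _ ≤ L * (t * ‖v‖) * ‖v‖ := mul_le_mul_of_nonneg_right h2 (norm_nonneg v)
        _ = L * t * ‖v‖ ^ 2 := by ring
    simp only [hf'_def, hB'_def]
    linarith
  have := image_le_of_deriv_right_le_deriv_boundary hcf hf' ha hcB hB' hbound
    (Set.right_mem_Icc.2 zero_le_one)
  simpa [hf_def, hB_def] using this

set_option maxHeartbeats 1000000 in
theorem dream_convergence (n : ℕ) (L μ β G ε : ℝ)
    (hL : 0 < L) (hμ : 0 < μ) (hμL : μ ≤ L)
    (hβ : 0 ≤ β) (hG : 0 ≤ G) (hε : 0 ≤ ε)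
    (F : EuclideanSpace ℝ (Fin n) → ℝ)
    (hdiff : Differentiable ℝ F)
    (hlip : ∀ w u, ‖gradient F w - gradient F u‖ ≤ L * ‖w - u‖)
    (wstar : EuclideanSpace ℝ (Fin n))
    (hmin : ∀ w, F wstar ≤ F w)
    (hPL : ∀ w, 2 * μ * (F w - F wstar) ≤ ‖gradient F w‖ ^ 2)
    (w g : ℕ → EuclideanSpace ℝ (Fin n))
    (hg : ∀ k, ‖g k - gradient F (w k)‖ ≤ β * G * ε)
    (hstep : ∀ k, w (k + 1) = w k - (1 / (2 * L)) • g k) :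
    ∀ k, F (w k) - F wstar ≤
      (1 - μ / (4 * L)) ^ k * (F (w 0) - F wstar) + (2 * β ^ 2 * G ^ 2 / μ) * ε ^ 2 := by
  set δ : ℝ := β * G * ε with hδ_def
  have hδ : 0 ≤ δ := by positivity
  set C : ℝ := 2 * β ^ 2 * G ^ 2 / μ * ε ^ 2 with hC_def
  have hC : 0 ≤ C := by positivity
  set ρ : ℝ := 1 - μ / (4 * L) with hρ_def
  have hρ : 0 ≤ ρ := by
    have : μ / (4 * L) ≤ 1 := by
      rw [div_le_one (by positivity)]; linarith
    simp only [hρ_def]; linarith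
  have hE : ∀ k, 0 ≤ F (w k) - F wstar := fun k => by linarith [hmin (w k)]
  have key : ∀ k, F (w (k + 1)) - F wstar ≤ ρ * (F (w k) - F wstar) + (μ / (4 * L)) * C := by
    intro k
    set a : EuclideanSpace ℝ (Fin n) := gradient F (w k) with ha_def
    set I : ℝ := ⟪a, g k⟫_ℝ with hI_def
    have hw : w (k + 1) = w k + (-((1 / (2 * L)) • g k)) := by
      rw [hstep k]; abel
    have hd := smooth_descent L hL F hdiff hlip (w k) (-((1 / (2 * L)) • g k))
    rw [← hw, inner_neg_right, real_inner_smul_right, norm_neg, norm_smul] at hd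
    have hnorm : ‖(1 / (2 * L) : ℝ)‖ = 1 / (2 * L) := by
      rw [Real.norm_eq_abs, abs_of_pos (by positivity)]
    rw [hnorm] at hd
    -- hd : F (w (k+1)) ≤ F (w k) + -(1/(2*L) * I) + L / 2 * (1/(2*L) * ‖g k‖)^2
    have hd' : F (w (k + 1)) ≤ F (w k) - (1 / (2 * L)) * I + (1 / (8 * L)) * ‖g k‖ ^ 2 := by
      have : L / 2 * (1 / (2 * L) * ‖g k‖) ^ 2 = (1 / (8 * L)) * ‖g k‖ ^ 2 := by
        field_simp; ring
      linarith [hd, this.le, this.ge]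
    have hInner : I = (‖a‖ ^ 2 + ‖g k‖ ^ 2 - ‖g k - a‖ ^ 2) / 2 := by
      have := norm_sub_sq_real a (g k)
      have hrev : ‖a - g k‖ = ‖g k - a‖ := norm_sub_rev _ _
      rw [hrev] at this
      rw [hI_def]; linarith
    have hd2 : F (w (k + 1)) ≤ F (w k) - ‖a‖ ^ 2 / (4 * L) + ‖g k - a‖ ^ 2 / (4 * L) := by
      rw [hInner] at hd'
      have heq : F (w k) - 1 / (2 * L) * ((‖a‖ ^ 2 + ‖g k‖ ^ 2 - ‖g k - a‖ ^ 2) / 2)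
          + 1 / (8 * L) * ‖g k‖ ^ 2
          = F (w k) - ‖a‖ ^ 2 / (4 * L) - ‖g k‖ ^ 2 / (8 * L) + ‖g k - a‖ ^ 2 / (4 * L) := by
        field_simp; ring
      have hpos : 0 ≤ ‖g k‖ ^ 2 / (8 * L) := by positivity
      linarith [hd', heq.le, heq.ge]
    have h5 : 2 * μ * (F (w k) - F wstar) / (4 * L) ≤ ‖a‖ ^ 2 / (4 * L) := by
      gcongr
      exact hPL (w k)
    have h6 : ‖g k - a‖ ^ 2 / (4 * L) ≤ δ ^ 2 / (4 * L) := by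
      rw [div_le_div_iff_of_pos_right (by positivity : (0:ℝ) < 4 * L)]
      have := hg k
      nlinarith [norm_nonneg (g k - a)]
    have h7 : 0 ≤ μ * (F (w k) - F wstar) / (4 * L) :=
      div_nonneg (mul_nonneg hμ.le (hE k)) (by positivity)
    have h8 : δ ^ 2 / (4 * L) ≤ δ ^ 2 / (2 * L) := by gcongr; linarith
    have heq2 : ρ * (F (w k) - F wstar) + (μ / (4 * L)) * C
        = F (w k) - F wstar - μ * (F (w k) - F wstar) / (4 * L) + δ ^ 2 / (2 * L) := by
      rw [hρ_def, hC_def, hδ_def]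
      field_simp
      ring
    rw [heq2]
    have h9 : μ * (F (w k) - F wstar) / (4 * L) ≤ 2 * μ * (F (w k) - F wstar) / (4 * L) := by
      rw [div_le_div_iff_of_pos_right (by positivity : (0:ℝ) < 4 * L)]
      nlinarith [mul_nonneg hμ.le (hE k)]
    linarith
  intro k
  induction k with
  | zero => simpa using by linarith [hC]
  | succ k ih =>
    calc F (w (k + 1)) - F wstar ≤ ρ * (F (w k) - F wstar) + (μ / (4 * L)) * C := key k
      _ ≤ ρ * (ρ ^ k * (F (w 0) - F wstar) + C) + (μ / (4 * L)) * C :=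
          add_le_add_left (mul_le_mul_of_nonneg_left ih hρ) _
      _ = ρ ^ (k + 1) * (F (w 0) - F wstar) + (ρ + μ / (4 * L)) * C := by ring
      _ = ρ ^ (k + 1) * (F (w 0) - F wstar) + C := by rw [hρ_def]; ring
end
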